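/- arXiv:2407.18422 — 2 statements merged into one kernel-verified Lean document; each statement's English description precedes it below -/
import Mathlib

section
/- Consider a two-state MDP with states s₁, s₂ and suppose w : [0,1] → [0,1] is strictly increasing with w(0)=0 and w(1)=1. For a state s and two actions a, a', define Q(a) = P(s₁|s,a)·V(s₁) + (1 - P(s₁|s,a))·V(s₂) and Q_w(a) = w(P(s₁|s,a))·V(s₁) + (1 - w(P(s₁|s,a)))·V(s₂), where V(s₁), V(s₂) are fixed reals. Then Q(a) ≥ Q(a') if and only if Q_w(a) ≥ Q_w(a'), whenever V(s₁) ≠ V(s₂); and if V(s₁) = V(s₂) both inequalities hold trivially. Hence argmax over actions is the same for Q and Q_w. -/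
/-- Two-state MDP backward-induction step: distorting transition probabilities with a
strictly increasing `w` (with `w 0 = 0`, `w 1 = 1`) does not change the comparison of
Q-values. Here `p a`, `p a'` are the probabilities of moving to state `s₁` under the
two actions, and `V₁, V₂` are the (fixed) continuation values of the two states. -/
theorem two_state_argmax_invariant (w : ℝ → ℝ)
    (hw : StrictMonoOn w (Set.Icc (0:ℝ) 1)) (hw0 : w 0 = 0) (hw1 : w 1 = 1)
    (p₁ p₂ : ℝ) (hp₁ : p₁ ∈ Set.Icc (0:ℝ) 1) (hp₂ : p₂ ∈ Set.Icc (0:ℝ) 1)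
    (V₁ V₂ : ℝ) :
    p₁ * V₁ + (1 - p₁) * V₂ ≥ p₂ * V₁ + (1 - p₂) * V₂ ↔
      w p₁ * V₁ + (1 - w p₁) * V₂ ≥ w p₂ * V₁ + (1 - w p₂) * V₂ := by
  have h1 : p₁ * V₁ + (1 - p₁) * V₂ ≥ p₂ * V₁ + (1 - p₂) * V₂ ↔
      (p₁ - p₂) * (V₁ - V₂) ≥ 0 := by constructor <;> intro h <;> nlinarith
  have h2 : w p₁ * V₁ + (1 - w p₁) * V₂ ≥ w p₂ * V₁ + (1 - w p₂) * V₂ ↔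
      (w p₁ - w p₂) * (V₁ - V₂) ≥ 0 := by constructor <;> intro h <;> nlinarith
  rw [h1, h2]
  rcases lt_trichotomy V₁ V₂ with hV | hV | hV
  · constructor <;> intro h
    · have : p₁ ≤ p₂ := by nlinarith
      have := hw.le_iff_le hp₁ hp₂ |>.mpr this
      nlinarith
    · have : w p₁ ≤ w p₂ := by nlinarith
      have : p₁ ≤ p₂ := hw.le_iff_le hp₁ hp₂ |>.mp this
      nlinarith
  · simp [hV]
  · constructor <;> intro h
    · have : p₂ ≤ p₁ := by nlinarith
      have := hw.le_iff_le hp₂ hp₁ |>.mpr this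
      nlinarith
    · have : w p₂ ≤ w p₁ := by nlinarith
      have : p₂ ≤ p₁ := hw.le_iff_le hp₂ hp₁ |>.mp this
      nlinarith
end

section
/- Suppose w : [0,1] → [0,1] is continuous with w(0)=0 and w(1)=1, and satisfies: for all p₁, p₂, q₁, q₂ ∈ [0,1] with p₁ + p₂ ≤ 1, q₁ + q₂ ≤ 1, p₁ ≠ q₁, p₂ ≠ q₂, (w(p₁)-w(q₁))/((w(p₁+p₂)-w(p₁)) - (w(q₁+q₂)-w(q₁))) = (p₁-q₁)/(p₂-q₂) whenever the denominators are nonzero. Then w(p) = p for all p ∈ [0,1]. -/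
/-- Core algebraic identity of Theorem 3: a continuous `w : [0,1] → [0,1]` with
`w 0 = 0`, `w 1 = 1` that satisfies the cross-ratio identity
`(w p₁ - w q₁) / ((w (p₁+p₂) - w p₁) - (w (q₁+q₂) - w q₁)) = (p₁ - q₁)/(p₂ - q₂)`
for all admissible probability pairs (whenever the denominators are nonzero)
must be the identity on `[0,1]`. -/
theorem distortion_cross_ratio_forces_identity (w : ℝ → ℝ)
    (hwmap : ∀ p ∈ Set.Icc (0:ℝ) 1, w p ∈ Set.Icc (0:ℝ) 1)
    (hcont : ContinuousOn w (Set.Icc (0:ℝ) 1))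
    (hw0 : w 0 = 0) (hw1 : w 1 = 1)
    (hratio : ∀ p₁ p₂ q₁ q₂ : ℝ,
      p₁ ∈ Set.Icc (0:ℝ) 1 → p₂ ∈ Set.Icc (0:ℝ) 1 →
      q₁ ∈ Set.Icc (0:ℝ) 1 → q₂ ∈ Set.Icc (0:ℝ) 1 →
      p₁ + p₂ ≤ 1 → q₁ + q₂ ≤ 1 → p₁ ≠ q₁ → p₂ ≠ q₂ →
      (w (p₁ + p₂) - w p₁) - (w (q₁ + q₂) - w q₁) ≠ 0 →
      (w p₁ - w q₁) / ((w (p₁ + p₂) - w p₁) - (w (q₁ + q₂) - w q₁)) =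
        (p₁ - q₁) / (p₂ - q₂)) :
    ∀ p ∈ Set.Icc (0:ℝ) 1, w p = p := by
  -- Key consequence: for 0 < a < b ≤ 1, either w b = w a or w a * b = w b * a.
  have key : ∀ a b : ℝ, 0 < a → a < b → b ≤ 1 → w b = w a ∨ w a * b = w b * a := by
    intro a b ha hab hb1
    by_cases hD : w b - w a = 0
    · left; linarith
    · right
      have hab' : a + (b - a) = b := by ring
      have h := hratio a (b - a) 0 0 ⟨ha.le, by linarith⟩ ⟨by linarith, by linarith⟩
        ⟨le_rfl, zero_le_one⟩ ⟨le_rfl, zero_le_one⟩ (by linarith) (by norm_num)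
        ha.ne' (by intro h; exact absurd h (by intro h'; linarith))
        (by rw [hab']; simp [hw0]; exact fun h => hD (by linarith))
      rw [hab'] at h
      simp only [hw0, sub_zero, add_zero] at h
      have hba : b - a ≠ 0 := by intro h'; exact absurd h' (by intro h''; linarith)
      rw [div_eq_div_iff hD hba] at h
      nlinarith [h]
  intro p hp
  obtain ⟨hp0, hp1⟩ := hp
  rcases eq_or_lt_of_le hp0 with h0 | h0
  · rw [← h0, hw0]
  rcases eq_or_lt_of_le hp1 with h1 | h1
  · rw [h1, hw1]
  -- 0 < p < 1
  rcases key p 1 h0 h1 le_rfl with hcase | hcase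
  · -- w p = 1 : derive contradiction via continuity at 0
    exfalso
    have hwp : w p = 1 := by rw [← hw1, hcase]
    have hc : ContinuousWithinAt w (Set.Icc (0:ℝ) 1) 0 :=
      hcont 0 ⟨le_rfl, zero_le_one⟩
    rw [Metric.continuousWithinAt_iff] at hc
    obtain ⟨δ, hδ, hball⟩ := hc (1/2) (by norm_num)
    set t := min (δ/2) (p/2) with ht
    have ht0 : 0 < t := lt_min (by linarith) (by linarith)
    have htp : t < p := lt_of_le_of_lt (min_le_right _ _) (by linarith)
    have ht1 : t ≤ 1 := by
      have := min_le_right (δ/2) (p/2); linarith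
    have htmem : t ∈ Set.Icc (0:ℝ) 1 := ⟨ht0.le, ht1⟩
    have hdist : dist t (0:ℝ) < δ := by
      rw [Real.dist_eq, sub_zero, abs_of_pos ht0]
      exact lt_of_le_of_lt (min_le_left _ _) (by linarith)
    have hwt : |w t| < 1/2 := by
      have := hball htmem hdist
      rwa [hw0, Real.dist_eq, sub_zero] at this
    have hwt1 : w t < 1 := lt_of_le_of_lt (le_abs_self _) (by linarith)
    have hwteq : w t = t := by
      rcases key t 1 ht0 (lt_of_lt_of_le htp hp1) le_rfl with hc1 | hc1
      · rw [hw1] at hc1; linarith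
      · rw [hw1] at hc1; linarith
    rcases key t p ht0 htp hp1 with hc2 | hc2
    · rw [hwp, hwteq] at hc2; linarith
    · rw [hwp, hwteq] at hc2
      have hp1' : t * p = t * 1 := by linarith
      have : p = 1 := mul_left_cancel₀ ht0.ne' hp1'
      linarith
  · -- w p * 1 = w 1 * p
    rw [hw1, mul_one, one_mul] at hcase
    exact hcase
end
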